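/- Consider the covariate-dependent two-groups model on 𝒳 ⊆ ℝ^p with covariate distribution m, with Π the probit class {x ↦ Φ(β₀ + βᵀx) : β₀ ∈ ℝ, β ∈ ℝ^p} (Φ the standard normal distribution function) and ℱ equal to either ℱ_Gauss or ℱ_↓. Suppose 𝒳 contains a non-empty open subset 𝒳' of ℝ^p such that m assigns strictly positive probability to every open ball contained in 𝒳'. Suppose F₀ ≠ F₁*, F₁* ∈ ℱ, and π*(x) = Φ(β₀* + (β*)ᵀx) with β* ≠ 0. Then P_{(π*, F₁*)} is identifiable: if P_{(π*,F₁*)} = P_{(π,F₁)} with π ∈ Π and F₁ ∈ ℱ, then π = π* m-almost everywhere and F₁ = F₁*. -/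

import Mathlib

/-!
Integrating the joint distribution over measurable sets `A` gives, for every `y`,
`π* x · (F₁* y - F₀ y) = π x · (F₁ y - F₀ y)` for `m`-a.e. `x`, hence everywhere on `𝒳'` by
continuity, since `m` charges every ball in `𝒳'`. Choosing `y₀` with `F₁* y₀ ≠ F₀ y₀` gives
`π* = l · π` on `𝒳'` for a constant `l > 0`. On a line through `𝒳'` along which `β*` does not
vanish this reads `Φ (a + t s') = l · Φ (b + t s)` for small `t`. Differentiating, the ratio of
two Gaussian densities is constant, so their quadratic exponents differ by a constant; this forces
`s = s'` and `b = a`, hence `l = 1`. Then `π = π*` a.e., and cancelling `π* > 0` gives `F₁ = F₁*`.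
-/

open MeasureTheory ProbabilityTheory

noncomputable section

/-- The standard normal distribution function `Φ`. -/
def stdNormalCDF (y : ℝ) : ℝ := ((gaussianReal 0 1) (Set.Iic y)).toReal

/-- `F` belongs to the class `ℱ_Gauss` of Gaussian location mixtures:
`F(y) = ∫ Φ(y - u) dG(u)` for some probability measure `G` on `ℝ`. -/
def IsGaussMixCDF (F : ℝ → ℝ) : Prop :=
  ∃ G : Measure ℝ, IsProbabilityMeasure G ∧ ∀ y : ℝ, F y = ∫ u, stdNormalCDF (y - u) ∂G

/-- `F` belongs to the class `ℱ_↓` of distribution functions having a nonincreasing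
density on `[0,1]` (and vanishing outside `[0,1]`). -/
def IsDecDensityDF (F : ℝ → ℝ) : Prop :=
  ∃ f : ℝ → ℝ, (∀ x, 0 ≤ f x) ∧ AntitoneOn f (Set.Icc 0 1) ∧
    (∀ x, x ∉ Set.Icc (0:ℝ) 1 → f x = 0) ∧ (∫ t, f t = 1) ∧
    ∀ y : ℝ, F y = ∫ t in Set.Iic y, f t

/-- Equality of the joint distributions `P_{π₁,F₁}` and `P_{π₂,F₂}` of `(X, Y)` in the
covariate-dependent two-groups model with covariate distribution `m` and null distribution
function `F0`: the measures of all rectangles `A × (-∞, y]` agree. -/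
def JointEq {α : Type*} [MeasurableSpace α] (m : Measure α)
    (F0 : ℝ → ℝ) (π₁ : α → ℝ) (F₁ : ℝ → ℝ) (π₂ : α → ℝ) (F₂ : ℝ → ℝ) : Prop :=
  ∀ A : Set α, MeasurableSet A → ∀ y : ℝ,
    ∫ x in A, (π₁ x * F₁ y + (1 - π₁ x) * F0 y) ∂m
      = ∫ x in A, (π₂ x * F₂ y + (1 - π₂ x) * F0 y) ∂m

open Filter Topology

lemma stdNormalCDF_eq_integral (y : ℝ) :
    stdNormalCDF y = ∫ x in Set.Iic y, gaussianPDFReal 0 1 x := by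
  rw [stdNormalCDF, gaussianReal_apply_eq_integral 0 one_ne_zero,
    ENNReal.toReal_ofReal (integral_nonneg fun x => gaussianPDFReal_nonneg 0 1 x)]

lemma gaussianPDFReal_zero_one (y : ℝ) :
    gaussianPDFReal 0 1 y = (√(2 * Real.pi))⁻¹ * Real.exp (-y ^ 2 / 2) := by
  simp [gaussianPDFReal]

lemma continuous_gaussianPDFReal_zero_one : Continuous (gaussianPDFReal 0 1) := by
  rw [gaussianPDFReal_def]; fun_prop

lemma stdNormalCDF_sub_stdNormalCDF (x y : ℝ) :
    stdNormalCDF y - stdNormalCDF x = ∫ t in x..y, gaussianPDFReal 0 1 t := by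
  have hint : Integrable (gaussianPDFReal 0 1) := integrable_gaussianPDFReal 0 1
  rw [stdNormalCDF_eq_integral, stdNormalCDF_eq_integral,
    intervalIntegral.integral_Iic_sub_Iic hint.integrableOn hint.integrableOn]

lemma hasDerivAt_stdNormalCDF (y : ℝ) :
    HasDerivAt stdNormalCDF (gaussianPDFReal 0 1 y) y := by
  have hint : Integrable (gaussianPDFReal 0 1) := integrable_gaussianPDFReal 0 1
  have hFTC : HasDerivAt (fun z => stdNormalCDF 0 + ∫ t in (0 : ℝ)..z, gaussianPDFReal 0 1 t)
      (gaussianPDFReal 0 1 y) y :=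
    (intervalIntegral.integral_hasDerivAt_right hint.intervalIntegrable
      hint.aestronglyMeasurable.stronglyMeasurableAtFilter
      continuous_gaussianPDFReal_zero_one.continuousAt).const_add (stdNormalCDF 0)
  refine hFTC.congr_of_eventuallyEq (Eventually.of_forall fun z => ?_)
  dsimp only
  rw [← stdNormalCDF_sub_stdNormalCDF]
  ring

lemma continuous_stdNormalCDF : Continuous stdNormalCDF :=
  continuous_iff_continuousAt.mpr fun y => (hasDerivAt_stdNormalCDF y).continuousAt

lemma stdNormalCDF_pos (y : ℝ) : 0 < stdNormalCDF y := by
  have hincr : 0 < stdNormalCDF y - stdNormalCDF (y - 1) := by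
    rw [stdNormalCDF_sub_stdNormalCDF]
    exact intervalIntegral.intervalIntegral_pos_of_pos_on
      (integrable_gaussianPDFReal 0 1).intervalIntegrable
      (fun x _ => gaussianPDFReal_pos 0 1 x one_ne_zero) (by linarith)
  have hnonneg : 0 ≤ stdNormalCDF (y - 1) := ENNReal.toReal_nonneg
  linarith

lemma stdNormalCDF_le_one (y : ℝ) : stdNormalCDF y ≤ 1 :=
  ENNReal.toReal_le_of_le_ofReal zero_le_one (by simpa using prob_le_one)

lemma sq_eq_sq_and_mul_eq_mul_of_eventually {a b s s' : ℝ}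
    (h : ∀ᶠ t in 𝓝 (0 : ℝ), (a + t * s') ^ 2 - a ^ 2 = (b + t * s) ^ 2 - b ^ 2) :
    s' ^ 2 = s ^ 2 ∧ a * s' = b * s := by
  obtain ⟨ε, hε, hball⟩ := Metric.eventually_nhds_iff.mp h
  have hδ : dist (ε / 2) 0 < ε := by
    rw [Real.dist_0_eq_abs, abs_of_pos (half_pos hε)]; linarith
  have hδ' : dist (-(ε / 2)) 0 < ε := by rwa [Real.dist_0_eq_abs, abs_neg, ← Real.dist_0_eq_abs]
  have hplus := hball hδ
  have hminus := hball hδ'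
  have hε2 : (ε / 2) ^ 2 ≠ 0 := by positivity
  constructor
  · apply mul_left_cancel₀ hε2
    linear_combination (hplus + hminus) / 2
  · apply mul_left_cancel₀ (half_pos hε).ne'
    linear_combination (hplus - hminus) / 4

lemma eq_and_eq_of_eventually_gaussianPDFReal_eq {a b s s' l : ℝ} (hs' : s' ≠ 0) (hl : 0 < l)
    (hdens : ∀ᶠ t in 𝓝 (0 : ℝ), gaussianPDFReal 0 1 (a + t * s') * s'
      = l * (gaussianPDFReal 0 1 (b + t * s) * s)) :
    s = s' ∧ b = a := by
  have h0 : gaussianPDFReal 0 1 a * s' = l * (gaussianPDFReal 0 1 b * s) := by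
    simpa using hdens.self_of_nhds
  have hss' : 0 < s * s' := by
    have hpos : 0 < gaussianPDFReal 0 1 a * s' ^ 2 :=
      mul_pos (gaussianPDFReal_pos 0 1 a one_ne_zero) (by positivity)
    have hscaled : gaussianPDFReal 0 1 a * s' ^ 2 = l * gaussianPDFReal 0 1 b * (s * s') := by
      linear_combination s' * h0
    exact pos_of_mul_pos_right (hscaled ▸ hpos)
      (mul_pos hl (gaussianPDFReal_pos 0 1 b one_ne_zero)).le
  have hs : s ≠ 0 := fun hs => by simp [hs] at hss'
  -- Dividing the identity at `t` by the one at `0` leaves an equality of Gaussian exponents.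
  have hexps : ∀ᶠ t in 𝓝 (0 : ℝ), (a + t * s') ^ 2 - a ^ 2 = (b + t * s) ^ 2 - b ^ 2 := by
    filter_upwards [hdens] with t ht
    have hcross : gaussianPDFReal 0 1 (a + t * s') * gaussianPDFReal 0 1 b
        = gaussianPDFReal 0 1 (b + t * s) * gaussianPDFReal 0 1 a := by
      apply mul_left_cancel₀ (mul_ne_zero (mul_ne_zero hl.ne' hs) hs')
      linear_combination (l * s * gaussianPDFReal 0 1 b) * ht
        - (l * s * gaussianPDFReal 0 1 (b + t * s)) * h0
    simp only [gaussianPDFReal_zero_one] at hcross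
    have hc : (√(2 * Real.pi))⁻¹ ^ 2 ≠ 0 := by positivity
    have hexp : -(a + t * s') ^ 2 / 2 + -b ^ 2 / 2 = -(b + t * s) ^ 2 / 2 + -a ^ 2 / 2 :=
      Real.exp_injective (mul_left_cancel₀ hc (by
        rw [Real.exp_add, Real.exp_add]; linear_combination hcross))
    linear_combination (-2) * hexp
  obtain ⟨hsq, hmul⟩ := sq_eq_sq_and_mul_eq_mul_of_eventually hexps
  have hs_eq : s = s' := by
    rcases sq_eq_sq_iff_eq_or_eq_neg.mp hsq.symm with hpos | hneg
    · exact hpos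
    · nlinarith [mul_self_nonneg s']
  exact ⟨hs_eq, mul_right_cancel₀ hs' (by rw [hs_eq] at hmul; exact hmul.symm)⟩

lemma eq_one_of_eventually_stdNormalCDF_eq_mul {a b s s' l : ℝ} (hs' : s' ≠ 0) (hl : 0 < l)
    (h : ∀ᶠ t in 𝓝 (0 : ℝ), stdNormalCDF (a + t * s') = l * stdNormalCDF (b + t * s)) :
    l = 1 := by
  have hderiv : ∀ u w t : ℝ, HasDerivAt (fun t => stdNormalCDF (u + t * w))
      (gaussianPDFReal 0 1 (u + t * w) * w) t := fun u w t =>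
    (hasDerivAt_stdNormalCDF _).comp t (by simpa using ((hasDerivAt_id t).mul_const w).const_add u)
  have hdens : ∀ᶠ t in 𝓝 (0 : ℝ), gaussianPDFReal 0 1 (a + t * s') * s'
      = l * (gaussianPDFReal 0 1 (b + t * s) * s) := by
    filter_upwards [h.eventually_nhds] with t ht
    exact (hderiv a s' t).unique (((hderiv b s t).const_mul l).congr_of_eventuallyEq ht)
  obtain ⟨-, hab⟩ := eq_and_eq_of_eventually_gaussianPDFReal_eq hs' hl hdens
  have hΦ := h.self_of_nhds
  simp only [zero_mul, add_zero, hab] at hΦ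
  exact mul_right_cancel₀ (stdNormalCDF_pos a).ne' (by linarith)

lemma eq_one_of_stdNormalCDF_affine_eqOn_mul {E : Type*} [AddCommGroup E] [Module ℝ E]
    [TopologicalSpace E] [ContinuousAdd E] [ContinuousSMul ℝ E] {U : Set E} (hU : IsOpen U)
    {z : E} (hz : z ∈ U) {f g : E →ₗ[ℝ] ℝ} (hf : f ≠ 0) {a b l : ℝ} (hl : 0 < l)
    (h : ∀ x ∈ U, stdNormalCDF (a + f x) = l * stdNormalCDF (b + g x)) :
    l = 1 := by
  obtain ⟨v, hv⟩ : ∃ v, f v ≠ 0 := by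
    by_contra! hzero
    exact hf (LinearMap.ext hzero)
  have hline : Tendsto (fun t : ℝ => z + t • v) (𝓝 0) (𝓝 z) := by
    simpa using ((continuous_id.smul continuous_const).const_add z).tendsto (0 : ℝ)
  refine eq_one_of_eventually_stdNormalCDF_eq_mul (a := a + f z) (b := b + g z) (s := g v)
    hv hl ?_
  filter_upwards [hline.eventually (hU.mem_nhds hz)] with t ht
  simpa [add_assoc] using h _ ht

lemma MeasureTheory.Measure.eqOn_of_ae_eq_of_forall_ball_pos {X Y : Type*} [PseudoMetricSpace X]
    [MeasurableSpace X] [TopologicalSpace Y] [T2Space Y] {m : Measure X} {U : Set X}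
    (hU : IsOpen U) (hball : ∀ z r, 0 < r → Metric.ball z r ⊆ U → 0 < m (Metric.ball z r))
    {f g : X → Y} (hf : Continuous f) (hg : Continuous g) (hfg : f =ᵐ[m] g) :
    Set.EqOn f g U := by
  intro x hx
  by_contra hne
  obtain ⟨r, hr, hsub⟩ := Metric.isOpen_iff.mp ((isOpen_ne_fun hf hg).inter hU) x ⟨hne, hx⟩
  exact (hball x r hr (hsub.trans Set.inter_subset_right)).ne'
    (measure_mono_null (fun y hy => (hsub hy).1) (ae_iff.mp hfg))

lemma JointEq.ae_mul_sub_eq {α : Type*} [MeasurableSpace α] {m : Measure α} [IsFiniteMeasure m]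
    {F0 F₁ F₂ : ℝ → ℝ} {π₁ π₂ : α → ℝ} (h₁ : Integrable π₁ m) (h₂ : Integrable π₂ m)
    (h : JointEq m F0 π₁ F₁ π₂ F₂) (y : ℝ) :
    ∀ᵐ x ∂m, π₁ x * (F₁ y - F0 y) = π₂ x * (F₂ y - F0 y) := by
  have hint : ∀ {π : α → ℝ} (F : ℝ → ℝ), Integrable π m →
      Integrable (fun x => π x * F y + (1 - π x) * F0 y) m := fun F hπ =>
    (hπ.mul_const (F y)).add (((integrable_const 1).sub hπ).mul_const (F0 y))
  filter_upwards [Integrable.ae_eq_of_forall_setIntegral_eq _ _ (hint F₁ h₁) (hint F₂ h₂)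
    (fun s hs _ => h s hs y)] with x hx
  linear_combination hx

lemma eq_of_ae_mul_eq_mul {α : Type*} [MeasurableSpace α] {m : Measure α} [NeZero m]
    {f g : α → ℝ} (hf : ∀ x, f x ≠ 0) (hfg : g =ᵐ[m] f) {c d : ℝ}
    (h : ∀ᵐ x ∂m, f x * c = g x * d) : c = d := by
  obtain ⟨x, hx, hgx⟩ := (h.and hfg).exists
  rw [hgx] at hx
  exact mul_left_cancel₀ (hf x) hx

lemma continuous_stdNormalCDF_affine {p : ℕ} (β₀ : ℝ) (β : EuclideanSpace ℝ (Fin p)) :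
    Continuous fun x : EuclideanSpace ℝ (Fin p) => stdNormalCDF (β₀ + ∑ i, β i * x i) :=
  continuous_stdNormalCDF.comp (by fun_prop)

lemma integrable_stdNormalCDF_affine {p : ℕ} {m : Measure (EuclideanSpace ℝ (Fin p))}
    [IsFiniteMeasure m] (β₀ : ℝ) (β : EuclideanSpace ℝ (Fin p)) :
    Integrable (fun x : EuclideanSpace ℝ (Fin p) => stdNormalCDF (β₀ + ∑ i, β i * x i)) m :=
  Integrable.of_bound (continuous_stdNormalCDF_affine β₀ β).aestronglyMeasurable 1
    (ae_of_all _ fun x => by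
      rw [Real.norm_of_nonneg (stdNormalCDF_pos _).le]; exact stdNormalCDF_le_one _)

lemma EuclideanSpace.innerₛₗ_apply_eq_sum {p : ℕ} (β x : EuclideanSpace ℝ (Fin p)) :
    innerₛₗ ℝ β x = ∑ i, β i * x i := by
  simp [PiLp.inner_apply, mul_comm]

theorem stmt_5_general {p : ℕ} (m : Measure (EuclideanSpace ℝ (Fin p)))
    (hm : IsProbabilityMeasure m)
    (𝒳' : Set (EuclideanSpace ℝ (Fin p))) (h𝒳ne : 𝒳'.Nonempty) (h𝒳open : IsOpen 𝒳')
    (hmball : ∀ (z : EuclideanSpace ℝ (Fin p)) (r : ℝ), 0 < r →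
      Metric.ball z r ⊆ 𝒳' → 0 < m (Metric.ball z r))
    (F0 F1star F1 : ℝ → ℝ)
    (hne : F0 ≠ F1star)
    (β₀star : ℝ) (βstar : EuclideanSpace ℝ (Fin p)) (hβstar : βstar ≠ 0)
    (πstar : EuclideanSpace ℝ (Fin p) → ℝ)
    (hπstar : ∀ x, πstar x = stdNormalCDF (β₀star + ∑ i, βstar i * x i))
    (β₀ : ℝ) (β : EuclideanSpace ℝ (Fin p))
    (π : EuclideanSpace ℝ (Fin p) → ℝ)
    (hπ : ∀ x, π x = stdNormalCDF (β₀ + ∑ i, β i * x i))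
    (heq : JointEq m F0 πstar F1star π F1) :
    (∀ᵐ x ∂m, π x = πstar x) ∧ F1 = F1star := by
  have := hm
  have hπstar_eq : πstar = fun x => stdNormalCDF (β₀star + ∑ i, βstar i * x i) := funext hπstar
  have hπ_eq : π = fun x => stdNormalCDF (β₀ + ∑ i, β i * x i) := funext hπ
  have hcond : ∀ y, ∀ᵐ x ∂m, πstar x * (F1star y - F0 y) = π x * (F1 y - F0 y) :=
    heq.ae_mul_sub_eq (hπstar_eq ▸ integrable_stdNormalCDF_affine _ _)
      (hπ_eq ▸ integrable_stdNormalCDF_affine _ _)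
  obtain ⟨y₀, hy₀⟩ := Function.ne_iff.mp hne
  have hc : F1star y₀ - F0 y₀ ≠ 0 := sub_ne_zero.mpr (Ne.symm hy₀)
  have hscale : ∀ x ∈ 𝒳', stdNormalCDF (β₀star + innerₛₗ ℝ βstar x)
      = (F1 y₀ - F0 y₀) / (F1star y₀ - F0 y₀) * stdNormalCDF (β₀ + innerₛₗ ℝ β x) := by
    intro x hx
    have hx := Measure.eqOn_of_ae_eq_of_forall_ball_pos h𝒳open hmball
      (hπstar_eq ▸ (continuous_stdNormalCDF_affine β₀star βstar).mul_const _)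
      (hπ_eq ▸ (continuous_stdNormalCDF_affine β₀ β).mul_const _) (hcond y₀) hx
    simp only [EuclideanSpace.innerₛₗ_apply_eq_sum, ← hπstar, ← hπ] at hx ⊢
    field_simp
    linear_combination hx
  obtain ⟨z, hz⟩ := h𝒳ne
  have hl : 0 < (F1 y₀ - F0 y₀) / (F1star y₀ - F0 y₀) :=
    pos_of_mul_pos_left ((hscale z hz).symm ▸ stdNormalCDF_pos _) (stdNormalCDF_pos _).le
  have hβstar' : innerₛₗ ℝ βstar ≠ 0 := fun h0 =>
    hβstar (inner_self_eq_zero.mp (LinearMap.congr_fun h0 βstar))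
  have hcc : F1 y₀ - F0 y₀ = F1star y₀ - F0 y₀ :=
    (div_eq_one_iff_eq hc).mp (eq_one_of_stdNormalCDF_affine_eqOn_mul h𝒳open hz hβstar' hl hscale)
  have hae : ∀ᵐ x ∂m, π x = πstar x := by
    filter_upwards [hcond y₀] with x hx
    exact (mul_right_cancel₀ hc (hcc ▸ hx)).symm
  refine ⟨hae, funext fun y => ?_⟩
  linarith [eq_of_ae_mul_eq_mul (fun x => (hπstar x ▸ stdNormalCDF_pos _).ne') hae (hcond y)]

/-- Lemma `ide`, probit case: in the covariate model with probit
mixing class and `ℱ = ℱ_Gauss` or `ℱ_↓`, if `m` charges every open ball contained in a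
nonempty open set `𝒳'`, `F₀ ≠ F₁*` and `β* ≠ 0`, then `P_{(π*,F₁*)}` is identifiable. -/
theorem stmt_5 {p : ℕ} (m : Measure (EuclideanSpace ℝ (Fin p)))
    (hm : IsProbabilityMeasure m)
    (𝒳' : Set (EuclideanSpace ℝ (Fin p))) (h𝒳ne : 𝒳'.Nonempty) (h𝒳open : IsOpen 𝒳')
    (hmball : ∀ (z : EuclideanSpace ℝ (Fin p)) (r : ℝ), 0 < r →
      Metric.ball z r ⊆ 𝒳' → 0 < m (Metric.ball z r))
    (F0 F1star F1 : ℝ → ℝ)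
    (hclass : (IsGaussMixCDF F1star ∧ IsGaussMixCDF F1) ∨
      (IsDecDensityDF F1star ∧ IsDecDensityDF F1))
    (hne : F0 ≠ F1star)
    (β₀star : ℝ) (βstar : EuclideanSpace ℝ (Fin p)) (hβstar : βstar ≠ 0)
    (πstar : EuclideanSpace ℝ (Fin p) → ℝ)
    (hπstar : ∀ x, πstar x = stdNormalCDF (β₀star + ∑ i, βstar i * x i))
    (β₀ : ℝ) (β : EuclideanSpace ℝ (Fin p))
    (π : EuclideanSpace ℝ (Fin p) → ℝ)
    (hπ : ∀ x, π x = stdNormalCDF (β₀ + ∑ i, β i * x i))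
    (heq : JointEq m F0 πstar F1star π F1) :
    (∀ᵐ x ∂m, π x = πstar x) ∧ F1 = F1star :=
  stmt_5_general m hm 𝒳' h𝒳ne h𝒳open hmball F0 F1star F1 hne β₀star βstar hβstar πstar hπstar β₀ β π
    hπ heq
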